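/- Subsumption: Let a ∈ ℝⁿ and b ∈ ℝᵐ, and let c = a ⊗ b ∈ ℝ^{n+m} be their composition (defined by c_k = a_{k-m} + b_{k-n} - Σ_{j+ℓ=k+1} a_j b_ℓ with appropriate zero-padding conventions). If a solves a sequence y : ℤ → ℝ, then c solves y. -/

import Mathlib

/-!
Multiplying out `c k * y (m₀ + k)` splits the left-hand side into three sums: the `a`-part,
shifted by `m`, which is `y (m₀ + m + n)` because `a` solves `y`; the `b`-part, shifted by `n`,
which is `∑ l, b l * y (m₀ + n + l)`; and the convolution part `∑ j l, a j * b l * y (m₀ + j + l)`.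
Running the recurrence of `a` at each shift `m₀ + l` turns the convolution part into the `b`-part,
so the two cancel.
-/

open Finset

variable {R : Type*}

def Solves [Semiring R] {n : ℕ} (v : Fin n → R) (y : ℤ → R) : Prop :=
  ∀ m₀ : ℤ, ∑ i : Fin n, v i * y (m₀ + (i : ℕ)) = y (m₀ + n)

section Reindexing

variable [NonUnitalNonAssocSemiring R]

theorem Fin.sum_dite_le_mul {N n m : ℕ} (hN : n + m = N) (g : Fin n → R) (F : ℕ → R) :
    ∑ k : Fin N, (if h : m ≤ (k : ℕ) then g ⟨k - m, by omega⟩ else 0) * F k =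
      ∑ i : Fin n, g i * F (m + i) := by
  symm
  refine Fintype.sum_of_injective (fun i : Fin n => (⟨m + i, by omega⟩ : Fin N))
    (fun i j h => Fin.ext (by simpa using congrArg Fin.val h)) _ _ (fun k hk => ?_)
    (fun i => by simp)
  have hk_lt : ¬ m ≤ (k : ℕ) := fun h => hk ⟨⟨k - m, by omega⟩, Fin.ext (by simp; omega)⟩
  simp [hk_lt]

theorem Fin.sum_ite_add_eq_mul {N j l : ℕ} (hjl : j + l < N) (x : R) (F : ℕ → R) :
    ∑ k : Fin N, (if j + l = (k : ℕ) then x else 0) * F k = x * F (j + l) := by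
  rw [Finset.sum_eq_single ⟨j + l, hjl⟩
    (fun k _ hk => by rw [if_neg (fun h => hk (Fin.ext h.symm)), zero_mul]) (by simp)]
  simp

theorem Fin.sum_convolution_mul {n m : ℕ} (a : Fin n → R) (b : Fin m → R) (F : ℕ → R) :
    ∑ k : Fin (n + m),
        (∑ j : Fin n, ∑ l : Fin m, if (j : ℕ) + (l : ℕ) = (k : ℕ) then a j * b l else 0) * F k =
      ∑ j : Fin n, ∑ l : Fin m, a j * b l * F (j + l) := by
  simp_rw [Finset.sum_mul]
  rw [Finset.sum_comm]
  refine Finset.sum_congr rfl fun j _ => ?_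
  rw [Finset.sum_comm]
  exact Finset.sum_congr rfl fun l _ => Fin.sum_ite_add_eq_mul (by omega) _ F

end Reindexing

section Solves

variable [CommSemiring R] {n : ℕ} {a : Fin n → R} {y : ℤ → R}

theorem Solves.sum_shift (ha : Solves a y) (m₀ : ℤ) (p : ℕ) :
    ∑ i : Fin n, a i * y (m₀ + (p + i : ℕ)) = y (m₀ + (p + n : ℕ)) := by
  simpa [add_assoc] using ha (m₀ + p)

theorem Solves.sum_sum_mul (ha : Solves a y) {m : ℕ} (b : Fin m → R) (m₀ : ℤ) :
    ∑ j : Fin n, ∑ l : Fin m, a j * b l * y (m₀ + (j + l : ℕ)) =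
      ∑ l : Fin m, b l * y (m₀ + (n + l : ℕ)) := by
  rw [Finset.sum_comm]
  refine Finset.sum_congr rfl fun l _ => ?_
  simp_rw [mul_comm (a _) (b l), mul_assoc, ← Finset.mul_sum, add_comm _ (l : ℕ), ha.sum_shift]

end Solves

/-- Subsumption: if `a` solves `y`, then the composition `c = a ⊗ b`
(of length n + m) solves `y`. -/
theorem stmt_11 (n m : ℕ) (a : Fin n → ℝ) (b : Fin m → ℝ)
    (c : Fin (n + m) → ℝ) (y : ℤ → ℝ)
    (ha : ∀ m₀ : ℤ, (∑ i : Fin n, a i * y (m₀ + (i : ℕ))) = y (m₀ + (n : ℕ)))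
    (hc : ∀ k : Fin (n + m),
      c k =
        (if h : m ≤ (k : ℕ) then a ⟨(k : ℕ) - m, by have := k.isLt; omega⟩ else 0)
        + (if h : n ≤ (k : ℕ) then b ⟨(k : ℕ) - n, by have := k.isLt; omega⟩ else 0)
        - ∑ j : Fin n, ∑ l : Fin m,
            if (j : ℕ) + (l : ℕ) = (k : ℕ) then a j * b l else 0) :
    ∀ m₀ : ℤ,
      (∑ k : Fin (n + m), c k * y (m₀ + (k : ℕ))) = y (m₀ + ((n + m : ℕ) : ℤ)) := by
  intro m₀
  have hsolves : Solves a y := ha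
  let F : ℕ → ℝ := fun k => y (m₀ + k)
  simp only [hc, sub_mul, add_mul, Finset.sum_sub_distrib, Finset.sum_add_distrib,
    Fin.sum_convolution_mul a b F, Fin.sum_dite_le_mul rfl a F,
    Fin.sum_dite_le_mul (add_comm m n) b F, F]
  rw [hsolves.sum_sum_mul, hsolves.sum_shift, add_sub_cancel_right, add_comm m]
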